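/- arXiv:1401.4363 — 6 statements merged into one kernel-verified Lean document; each statement's English description precedes it below -/
import Mathlib

section
/- Let k ≥ 1 and let G be a simple graph of order n containing no path on k+2 vertices. Then the number of edges of G satisfies e(G) ≤ kn/2, with equality if and only if G is a disjoint union of copies of the complete graph K_{k+1}. -/
open Finset

def Snk (n k : ℕ) : SimpleGraph (Fin n) where
  Adj i j := i ≠ j ∧ (i.val < k ∨ j.val < k)
  symm := ⟨fun i j h => ⟨h.1.symm, h.2.symm⟩⟩
  loopless := ⟨fun i h => h.1 rfl⟩

instance SnkDec (n k : ℕ) : DecidableRel (Snk n k).Adj :=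
  fun i j => inferInstanceAs (Decidable (i ≠ j ∧ (i.val < k ∨ j.val < k)))

def signlessLaplacian {n : ℕ} (G : SimpleGraph (Fin n)) [DecidableRel G.Adj] :
    Matrix (Fin n) (Fin n) ℝ :=
  Matrix.diagonal (fun i => (G.degree i : ℝ)) + G.adjMatrix ℝ

noncomputable def qIndex {n : ℕ} (G : SimpleGraph (Fin n)) [DecidableRel G.Adj] : ℝ :=
  sSup (spectrum ℝ (signlessLaplacian G))

def HasPathOn {V : Type*} (G : SimpleGraph V) (m : ℕ) : Prop :=
  ∃ f : Fin m → V, Function.Injective f ∧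
    ∀ (i : ℕ) (h : i + 1 < m), G.Adj (f ⟨i, by omega⟩) (f ⟨i + 1, h⟩)

def HasCycleOn {V : Type*} (G : SimpleGraph V) (m : ℕ) : Prop :=
  ∃ f : ZMod m → V, Function.Injective f ∧ ∀ i, G.Adj (f i) (f (i + 1))

/-!
Induction on the number of vertices; a disjoint union of copies of `K_{k+1}` is described
locally, as a `k`-regular graph in which every neighbourhood is a clique.

If some vertex `v` has degree at most `k / 2`, delete it. Equality is then impossible: it would
force `G - v` to be a union of `K_{k+1}`'s, and a neighbour of `v` would start a path through
its whole clique, giving a path on `k + 2` vertices.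

Otherwise every degree exceeds `k / 2`. A longest path `x₀ … x_{m-1}` has `m ≤ k + 1` vertices
and both its ends have all their neighbours on it, so by pigeonhole there is an `i` with
`x₀ ~ x_{i+1}` and `x_i ~ x_{m-1}`. The vertices of the path then form a cycle, and maximality
shows that no edge leaves them. Their degrees add up to at most `m (m - 1) ≤ k m`, with equality
only for a `K_{k+1}`, and the induction hypothesis applies to the remaining vertices.
-/

namespace List

variable {α : Type*} {R : α → α → Prop}

theorem IsChain.rotate {l : List α} (hl : l.IsChain R)
    (hR : ∀ x ∈ l.getLast?, ∀ y ∈ l.head?, R x y) (n : ℕ) : (l.rotate n).IsChain R := by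
  rcases eq_or_ne l [] with rfl | hne
  · simp
  rw [← rotate_mod]
  rcases Nat.eq_zero_or_pos (n % l.length) with h0 | hpos
  · rwa [h0, rotate_zero]
  have hlt : n % l.length < l.length := Nat.mod_lt _ (length_pos_of_ne_nil hne)
  rw [rotate_eq_drop_append_take hlt.le]
  refine (hl.drop _).append (hl.take _) ?_
  rw [getLast?_drop, if_neg (by omega), head?_take, if_neg (by omega)]
  exact hR

end List

section

open SimpleGraph

variable {V : Type*} {G : SimpleGraph V} {l : List V} {R : Finset V}

theorem hasPathOn_iff_exists_list {m : ℕ} :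
    HasPathOn G m ↔ ∃ l : List V, l.Nodup ∧ l.IsChain G.Adj ∧ l.length = m := by
  constructor
  · rintro ⟨f, hf, hadj⟩
    exact ⟨List.ofFn f, List.nodup_ofFn.mpr hf, List.isChain_ofFn.mpr hadj, List.length_ofFn⟩
  · rintro ⟨l, hnd, hch, rfl⟩
    exact ⟨fun i => l[i], fun i j h => Fin.ext (hnd.getElem_inj_iff.mp h),
      fun i h => List.isChain_iff_getElem.mp hch i h⟩

theorem hasPathOn_cons (hnd : l.Nodup) (hch : l.IsChain G.Adj) {u : V} (hu : u ∉ l)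
    (hadj : ∀ x ∈ l.head?, G.Adj u x) : HasPathOn G (l.length + 1) :=
  hasPathOn_iff_exists_list.mpr ⟨u :: l, hnd.cons hu, hch.cons hadj, rfl⟩

theorem HasPathOn.map {W : Type*} {H : SimpleGraph W} (φ : G ↪g H) {m : ℕ}
    (h : HasPathOn G m) : HasPathOn H m := by
  obtain ⟨f, hf, hadj⟩ := h
  exact ⟨φ ∘ f, φ.injective.comp hf, fun i hi => φ.map_rel_iff.mpr (hadj i hi)⟩

theorem hasPathOn_of_isClique_of_adj [DecidableEq V] {s : Finset V}
    (hs : G.IsClique (s : Set V)) {u v : V} (hv : v ∉ s) (hu : u ∈ s) (hvu : G.Adj v u) :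
    HasPathOn G (#s + 1) := by
  set l := u :: (s.erase u).toList
  have hmem : ∀ x ∈ l, x ∈ s := by
    simp only [l, List.mem_cons, Finset.mem_toList]
    rintro x (rfl | hx)
    exacts [hu, Finset.mem_of_mem_erase hx]
  have hnd : l.Nodup := (Finset.nodup_toList _).cons (by simp)
  have hch : l.IsChain G.Adj := List.Pairwise.isChain <| hnd.pairwise_of_forall_ne
    fun x hx y hy hxy => hs (hmem x hx) (hmem y hy) hxy
  have hlen : l.length = #s := by
    simp [l, Finset.card_erase_of_mem hu, Nat.sub_add_cancel (Finset.card_pos.mpr ⟨u, hu⟩)]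
  rw [← hlen]
  exact hasPathOn_cons hnd hch (fun h => hv (hmem v h)) (by simpa [l] using hvu)

theorem hasPathOn_of_adj_of_isRegularOfDegree [DecidableEq V] {W : Type*} [Fintype W]
    [DecidableEq W] {H : SimpleGraph W} [DecidableRel H.Adj] (φ : H ↪g G) {k : ℕ}
    (hreg : H.IsRegularOfDegree k) (hcl : ∀ w, H.IsClique (H.neighborSet w)) {u : W} {v : V}
    (hv : v ∉ Set.range φ) (hvu : G.Adj v (φ u)) : HasPathOn G (k + 2) := by
  set s := insert u (H.neighborFinset u)
  have hs : H.IsClique (s : Set W) := by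
    rw [Finset.coe_insert, coe_neighborFinset]
    exact (hcl u).insert fun w hw _ => hw
  have hcard : #(s.map φ.toEmbedding) = k + 1 := by
    rw [Finset.card_map, Finset.card_insert_of_notMem (by simp), card_neighborFinset_eq_degree,
      hreg.degree_eq]
  have hs' : G.IsClique (s.map φ.toEmbedding : Set V) := by
    simp only [Finset.coe_map, RelEmbedding.coe_toEmbedding]
    rintro _ ⟨a, ha, rfl⟩ _ ⟨b, hb, rfl⟩ hab
    exact φ.map_adj_iff.mpr (hs ha hb (ne_of_apply_ne φ hab))
  have hvs : v ∉ s.map φ.toEmbedding := fun h => hv ((Finset.mem_map.mp h).imp fun _ h => h.2)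
  simpa [hcard] using hasPathOn_of_isClique_of_adj hs' hvs (by simp [s]) hvu

theorem mem_of_adj_of_head_mem (hnd : l.Nodup) (hch : l.IsChain G.Adj)
    (hmax : ¬ HasPathOn G (l.length + 1)) {x u : V} (hx : x ∈ l.head?) (hxu : G.Adj x u) :
    u ∈ l := by
  by_contra hu
  refine hmax (hasPathOn_cons hnd hch hu fun y hy => ?_)
  rw [Option.mem_unique hy hx]
  exact hxu.symm

theorem mem_of_adj_of_getLast_mem (hnd : l.Nodup) (hch : l.IsChain G.Adj)
    (hmax : ¬ HasPathOn G (l.length + 1)) {y u : V} (hy : y ∈ l.getLast?) (hyu : G.Adj y u) :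
    u ∈ l := by
  rw [← List.mem_reverse]
  refine mem_of_adj_of_head_mem (List.nodup_reverse.mpr hnd) ?_ (by simpa using hmax)
    (by simpa using hy) hyu
  exact List.isChain_reverse.mpr (hch.imp fun _ _ h => h.symm)

theorem mem_of_adj_of_cycle (hnd : l.Nodup) (hch : l.IsChain G.Adj)
    (hcyc : ∀ x ∈ l.getLast?, ∀ y ∈ l.head?, G.Adj x y)
    (hmax : ¬ HasPathOn G (l.length + 1)) {u w : V} (hw : w ∈ l) (huw : G.Adj u w) :
    u ∈ l := by
  by_contra hu
  obtain ⟨j, hj, rfl⟩ := List.mem_iff_getElem.mp hw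
  refine hmax ?_
  rw [← List.length_rotate l j]
  refine hasPathOn_cons (List.nodup_rotate.mpr hnd) (hch.rotate hcyc j)
    (fun h => hu (List.mem_rotate.mp h)) fun y hy => ?_
  rw [List.head?_rotate hj, List.getElem?_eq_getElem hj, Option.mem_some_iff] at hy
  exact hy ▸ huw

theorem exists_cycle_perm_of_crossing (hch : l.IsChain G.Adj) {x y : V} (hx : x ∈ l.head?)
    (hy : y ∈ l.getLast?) {i : ℕ} (hi : i + 1 < l.length) (hxi : G.Adj x l[i + 1])
    (hiy : G.Adj l[i] y) :
    ∃ c : List V, c.Perm l ∧ c.IsChain G.Adj ∧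
      ∀ a ∈ c.getLast?, ∀ b ∈ c.head?, G.Adj a b := by
  rw [Option.mem_def] at hx hy
  -- the cycle `x₀ … x_i x_{m-1} … x_{i+1}`
  refine ⟨l.take (i + 1) ++ (l.drop (i + 1)).reverse, ?_, ?_, ?_⟩
  · conv_rhs => rw [← List.take_append_drop (i + 1) l]
    exact (List.reverse_perm _).append_left _
  · refine (hch.take _).append
      (List.isChain_reverse.mpr ((hch.drop _).imp fun _ _ h => h.symm)) ?_
    rw [List.getLast?_take, List.head?_reverse, List.getLast?_drop, if_neg (by omega),
      if_neg (by omega), List.getElem?_eq_getElem (by omega), hy]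
    simpa using hiy
  · rw [List.getLast?_append, List.getLast?_reverse, List.head?_drop, List.head?_append,
      List.head?_take, if_neg (by omega), hx, List.getElem?_eq_getElem hi]
    simpa using hxi.symm

theorem neighborSet_subset_compl (hR : ∀ u w, G.Adj u w → w ∈ R → u ∈ R) {v : V}
    (hv : v ∉ R) : G.neighborSet v ⊆ (↑R)ᶜ :=
  fun w hw hwR => hv (hR v w hw hwR)

variable [Fintype V] [DecidableRel G.Adj]

theorem SimpleGraph.IsRegularOfDegree.two_mul_card_edgeFinset {k : ℕ}
    (hreg : G.IsRegularOfDegree k) : 2 * #G.edgeFinset = k * Fintype.card V := by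
  rw [← G.sum_degrees_eq_twice_card_edges, Finset.sum_congr rfl fun v _ => hreg.degree_eq v,
    Finset.sum_const, Finset.card_univ, smul_eq_mul, mul_comm]

theorem card_filter_adj_getD (hnd : l.Nodup) {x : V} (hN : ∀ u, G.Adj x u → u ∈ l) :
    #{j ∈ range l.length | G.Adj x (l.getD j x)} = G.degree x := by
  rw [← G.card_neighborFinset_eq_degree]
  refine Finset.card_bij (fun j _ => l.getD j x) (fun j hj => ?_) (fun i hi j hj h => ?_)
    (fun u hu => ?_)
  · simpa using (Finset.mem_filter.mp hj).2
  · simp only [Finset.mem_filter, Finset.mem_range] at hi hj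
    rw [List.getD_eq_getElem _ _ hi.1, List.getD_eq_getElem _ _ hj.1] at h
    exact hnd.getElem_inj_iff.mp h
  · rw [mem_neighborFinset] at hu
    obtain ⟨j, hj, rfl⟩ := List.mem_iff_getElem.mp (hN u hu)
    exact ⟨j, by simpa [List.getD_eq_getElem _ _ hj, hj] using hu, List.getD_eq_getElem _ _ hj⟩

theorem exists_crossing_of_le_degree_add_degree (hnd : l.Nodup) {x y : V} (hx : x ∈ l.head?)
    (hy : y ∈ l.getLast?) (hNx : ∀ u, G.Adj x u → u ∈ l)
    (hNy : ∀ u, G.Adj y u → u ∈ l)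
    (hdeg : l.length ≤ G.degree x + G.degree y) :
    ∃ i, ∃ hi : i + 1 < l.length, G.Adj x l[i + 1] ∧ G.Adj l[i] y := by
  set m := l.length
  have hm : 0 < m := List.length_pos_of_ne_nil (by rintro rfl; simp at hx)
  have hx0 : l.getD 0 x = x := by
    rw [List.getD_eq_getElem?_getD, ← List.head?_eq_getElem?, Option.mem_def.mp hx]; rfl
  have hym : l.getD (m - 1) y = y := by
    rw [List.getD_eq_getElem?_getD, ← List.getLast?_eq_getElem?, Option.mem_def.mp hy]; rfl
  set A := {j ∈ range m | G.Adj x (l.getD j x)}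
  set B := {j ∈ range m | G.Adj y (l.getD j y)}
  have hA : A ⊆ (range m).erase 0 := by
    intro j hj
    simp only [A, Finset.mem_filter] at hj
    refine Finset.mem_erase.mpr ⟨?_, hj.1⟩
    rintro rfl
    exact G.irrefl (hx0 ▸ hj.2)
  have hB : B.image (· + 1) ⊆ (range m).erase 0 := by
    simp only [Finset.subset_iff, Finset.mem_image, B, Finset.mem_filter, Finset.mem_range]
    rintro _ ⟨j, ⟨hjm, hj⟩, rfl⟩
    have : j ≠ m - 1 := by rintro rfl; exact G.irrefl (hym ▸ hj)
    simp only [Finset.mem_erase, Finset.mem_range]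
    omega
  have hcard : #((range m).erase 0) < #A + #(B.image (· + 1)) := by
    rw [Finset.card_image_of_injective _ (add_left_injective 1), card_filter_adj_getD hnd hNx,
      card_filter_adj_getD hnd hNy, Finset.card_erase_of_mem (by simpa using hm), card_range]
    omega
  obtain ⟨j, hj⟩ := Finset.inter_nonempty_of_card_lt_card_add_card hA hB hcard
  obtain ⟨hjA, hjB⟩ := Finset.mem_inter.mp hj
  obtain ⟨i, hiB, rfl⟩ := Finset.mem_image.mp hjB
  simp only [A, B, Finset.mem_filter, Finset.mem_range] at hjA hiB
  refine ⟨i, hjA.1, ?_, ?_⟩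
  · rw [← List.getD_eq_getElem _ x]
    exact hjA.2
  · rw [← List.getD_eq_getElem _ y]
    exact hiB.2.symm

theorem mem_of_adj_of_not_hasPathOn (hnd : l.Nodup) (hch : l.IsChain G.Adj)
    (hmax : ¬ HasPathOn G (l.length + 1)) (hdeg : ∀ v, l.length ≤ 2 * G.degree v) {u w : V}
    (hw : w ∈ l) (huw : G.Adj u w) : u ∈ l := by
  obtain ⟨x, hx⟩ := Option.isSome_iff_exists.mp (List.isSome_head?.mpr (List.ne_nil_of_mem hw))
  obtain ⟨y, hy⟩ :=
    Option.isSome_iff_exists.mp (List.getLast?_isSome.mpr (List.ne_nil_of_mem hw))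
  obtain ⟨i, hi, hxi, hiy⟩ := exists_crossing_of_le_degree_add_degree hnd hx hy
    (fun _ => mem_of_adj_of_head_mem hnd hch hmax hx)
    (fun _ => mem_of_adj_of_getLast_mem hnd hch hmax hy)
    (by have := hdeg x; have := hdeg y; omega)
  obtain ⟨c, hcl, hcch, hcyc⟩ := exists_cycle_perm_of_crossing hch hx hy hi hxi hiy
  rw [← hcl.mem_iff] at hw ⊢
  exact mem_of_adj_of_cycle (hcl.nodup_iff.mpr hnd) hcch hcyc (by rwa [hcl.length_eq]) hw huw

variable [DecidableEq V] {k : ℕ}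

theorem exists_finset_closed_of_lt_two_mul_degree [Nonempty V] (hP : ¬ HasPathOn G (k + 2))
    (hdeg : ∀ v, k < 2 * G.degree v) :
    ∃ R : Finset V, R.Nonempty ∧ #R ≤ k + 1 ∧
      ∀ u w, G.Adj u w → w ∈ R → u ∈ R := by
  classical
  obtain ⟨x⟩ := ‹Nonempty V›
  have h1 : HasPathOn G 1 := hasPathOn_iff_exists_list.mpr ⟨[x], by simp, by simp, rfl⟩
  set m := Nat.findGreatest (HasPathOn G) (k + 1)
  have hmk : m ≤ k + 1 := Nat.findGreatest_le _
  have hmax : ¬ HasPathOn G (m + 1) := by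
    rcases hmk.lt_or_eq with h | h
    · exact Nat.findGreatest_is_greatest (Nat.lt_succ_self m) (by omega)
    · rwa [h]
  obtain ⟨l, hnd, hch, hl⟩ :=
    hasPathOn_iff_exists_list.mp (Nat.findGreatest_spec (by omega) h1 : HasPathOn G m)
  have hm : 1 ≤ m := Nat.le_findGreatest (by omega) h1
  refine ⟨l.toFinset, ?_, ?_, fun u w huw hw => ?_⟩
  · exact ⟨l.head (by rintro rfl; simp at hl; omega), by simp [List.head_mem]⟩
  · rw [List.toFinset_card_of_nodup hnd, hl]
    exact hmk
  · rw [List.mem_toFinset] at hw ⊢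
    exact mem_of_adj_of_not_hasPathOn hnd hch (hl ▸ hmax) (fun v => by have := hdeg v; omega)
      hw huw

theorem two_mul_card_edgeFinset_eq_sum_degree_add
    (hR : ∀ u w, G.Adj u w → w ∈ R → u ∈ R) :
    2 * #G.edgeFinset = ∑ v ∈ R, G.degree v + 2 * #(G.induce (↑R)ᶜ).edgeFinset := by
  rw [← G.sum_degrees_eq_twice_card_edges, ← (G.induce _).sum_degrees_eq_twice_card_edges,
    ← Finset.sum_add_sum_compl R,
    Finset.sum_subtype Rᶜ (p := (· ∈ ((↑R)ᶜ : Set V))) (by simp)]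
  congr 1
  exact Finset.sum_congr rfl fun v _ =>
    (degree_induce_of_neighborSet_subset (neighborSet_subset_compl hR v.2)).symm

theorem isRegularOfDegree_of_induce_compl (hR : ∀ u w, G.Adj u w → w ∈ R → u ∈ R)
    (hRN : ∀ v ∈ R, G.neighborFinset v = R.erase v) (hcard : #R = k + 1)
    (hreg : (G.induce (↑R)ᶜ).IsRegularOfDegree k)
    (hcl : ∀ w, (G.induce (↑R)ᶜ).IsClique ((G.induce (↑R)ᶜ).neighborSet w)) :
    G.IsRegularOfDegree k ∧ ∀ v, G.IsClique (G.neighborSet v) := by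
  have hRcl : ∀ a ∈ R, ∀ b ∈ R, a ≠ b → G.Adj a b := fun a ha b hb hab => by
    simpa [hRN a ha, hab.symm, hb] using G.mem_neighborFinset a b
  refine ⟨fun v => ?_, fun v a ha b hb hab => ?_⟩
  · by_cases hv : v ∈ R
    · rw [← G.card_neighborFinset_eq_degree, hRN v hv, Finset.card_erase_of_mem hv, hcard,
        Nat.add_sub_cancel]
    · rw [← degree_induce_of_neighborSet_subset (v := ⟨v, hv⟩)
        (neighborSet_subset_compl hR hv)]
      exact hreg _
  · by_cases hv : v ∈ R
    · have hN (x : V) (hx : G.Adj v x) : x ∈ R :=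
        (Finset.mem_erase.mp (hRN v hv ▸ (G.mem_neighborFinset v x).mpr hx)).2
      exact hRcl a (hN a ha) b (hN b hb) hab
    · have ha' := neighborSet_subset_compl hR hv ha
      have hb' := neighborSet_subset_compl hR hv hb
      exact hcl ⟨v, hv⟩ (show (⟨a, ha'⟩ : ((↑R)ᶜ : Set V)) ∈ _ from ha)
        (show (⟨b, hb'⟩ : ((↑R)ᶜ : Set V)) ∈ _ from hb)
        fun h => hab (congrArg Subtype.val h)

theorem two_mul_card_edgeFinset_le_of_closed (hR : ∀ u w, G.Adj u w → w ∈ R → u ∈ R)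
    (hRne : R.Nonempty) (hRk : #R ≤ k + 1)
    (ih_le : 2 * #(G.induce (↑R)ᶜ).edgeFinset ≤ k * Fintype.card ((↑R)ᶜ : Set V))
    (ih_eq : 2 * #(G.induce (↑R)ᶜ).edgeFinset = k * Fintype.card ((↑R)ᶜ : Set V) →
      (G.induce (↑R)ᶜ).IsRegularOfDegree k ∧
        ∀ w, (G.induce (↑R)ᶜ).IsClique ((G.induce (↑R)ᶜ).neighborSet w)) :
    2 * #G.edgeFinset ≤ k * Fintype.card V ∧
      (2 * #G.edgeFinset = k * Fintype.card V →
        G.IsRegularOfDegree k ∧ ∀ v, G.IsClique (G.neighborSet v)) := by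
  have hsplit := two_mul_card_edgeFinset_eq_sum_degree_add hR
  have hcard : k * Fintype.card V = k * #R + k * Fintype.card ((↑R)ᶜ : Set V) := by
    rw [← mul_add, ← Set.toFinset_card, Set.toFinset_compl, Finset.toFinset_coe,
      Finset.card_add_card_compl]
  have hNR : ∀ v ∈ R, G.neighborFinset v ⊆ R.erase v := fun v hv w hw =>
    Finset.mem_erase.mpr ⟨(G.ne_of_adj ((G.mem_neighborFinset v w).mp hw)).symm,
      hR w v ((G.mem_neighborFinset v w).mp hw).symm hv⟩
  have hdegR : ∀ v ∈ R, G.degree v ≤ #R - 1 := fun v hv => by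
    rw [← G.card_neighborFinset_eq_degree, ← Finset.card_erase_of_mem hv]
    exact Finset.card_le_card (hNR v hv)
  have hsum : ∑ v ∈ R, G.degree v ≤ #R * (#R - 1) := by
    simpa using Finset.sum_le_card_nsmul R _ _ hdegR
  have hRk' : #R * (#R - 1) ≤ k * #R := by
    rw [mul_comm k]
    exact Nat.mul_le_mul_left _ (by omega)
  refine ⟨by omega, fun heq => ?_⟩
  have hsum_eq : ∑ v ∈ R, G.degree v = #R * (#R - 1) := by omega
  obtain ⟨hreg, hcl⟩ := ih_eq (by omega)
  have hdeg : ∀ v ∈ R, G.degree v = #R - 1 := by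
    refine (Finset.sum_eq_sum_iff_of_le hdegR).mp ?_
    rwa [Finset.sum_const, smul_eq_mul]
  have hk : #R = k + 1 := by
    have := Nat.eq_of_mul_eq_mul_left hRne.card_pos (show #R * (#R - 1) = #R * k by linarith)
    have := hRne.card_pos
    omega
  refine isRegularOfDegree_of_induce_compl hR (fun v hv => ?_) hk hreg hcl
  refine Finset.eq_of_subset_of_card_le (hNR v hv) ?_
  rw [G.card_neighborFinset_eq_degree, hdeg v hv, Finset.card_erase_of_mem hv]

theorem card_edgeFinset_induce_compl_singleton_add_degree (v : V) :
    #(G.induce {v}ᶜ).edgeFinset + G.degree v = #G.edgeFinset := by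
  rw [card_edgeFinset_induce_compl_singleton, card_edgeFinset_deleteIncidenceSet,
    ← G.card_incidenceFinset_eq_degree]
  exact Nat.sub_add_cancel (Finset.card_le_card (G.incidenceFinset_subset v))

theorem two_mul_card_edgeFinset_lt_of_two_mul_degree_le (hk : 1 ≤ k)
    (hP : ¬ HasPathOn G (k + 2)) {v : V} (hv : 2 * G.degree v ≤ k)
    (ih_le : 2 * #(G.induce {v}ᶜ).edgeFinset ≤ k * Fintype.card ({v}ᶜ : Set V))
    (ih_eq : 2 * #(G.induce {v}ᶜ).edgeFinset = k * Fintype.card ({v}ᶜ : Set V) →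
      (G.induce {v}ᶜ).IsRegularOfDegree k ∧
        ∀ w, (G.induce {v}ᶜ).IsClique ((G.induce {v}ᶜ).neighborSet w)) :
    2 * #G.edgeFinset < k * Fintype.card V := by
  have hsplit := card_edgeFinset_induce_compl_singleton_add_degree (G := G) v
  have hcard : Fintype.card V = Fintype.card ({v}ᶜ : Set V) + 1 := by
    rw [Fintype.card_compl_set, Set.card_singleton,
      Nat.sub_add_cancel (Fintype.card_pos_iff.mpr ⟨v⟩)]
  rw [hcard, mul_add_one]
  by_contra! hge
  obtain ⟨hreg, hcl⟩ := ih_eq (by omega)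
  obtain ⟨u, hu⟩ : (G.neighborFinset v).Nonempty := by
    rw [← Finset.card_pos, G.card_neighborFinset_eq_degree]
    omega
  rw [mem_neighborFinset] at hu
  exact hP (hasPathOn_of_adj_of_isRegularOfDegree (Embedding.induce _) hreg hcl
    (u := ⟨u, hu.ne'⟩) (by simp) hu)

theorem two_mul_card_edgeFinset_le_of_not_hasPathOn (hk : 1 ≤ k) (hP : ¬ HasPathOn G (k + 2)) :
    2 * #G.edgeFinset ≤ k * Fintype.card V ∧
      (2 * #G.edgeFinset = k * Fintype.card V →
        G.IsRegularOfDegree k ∧ ∀ v, G.IsClique (G.neighborSet v)) := by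
  induction hn : Fintype.card V using Nat.strong_induction_on generalizing V with
  | _ n ih =>
  subst hn
  rcases isEmpty_or_nonempty V with hV | hV
  · exact ⟨by simp [Finset.eq_empty_of_isEmpty G.edgeFinset],
      fun _ => ⟨.of_isEmpty, isEmptyElim⟩⟩
  have hP' (s : Set V) : ¬ HasPathOn (G.induce s) (k + 2) :=
    fun h => hP (h.map (Embedding.induce s))
  by_cases hlow : ∃ v, 2 * G.degree v ≤ k
  · obtain ⟨v, hv⟩ := hlow
    obtain ⟨h1, h2⟩ := ih _
      (Fintype.card_subtype_lt (p := (· ∈ ({v}ᶜ : Set V))) (x := v) (by simp))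
      (G := G.induce {v}ᶜ) (hP' _) rfl
    have hlt := two_mul_card_edgeFinset_lt_of_two_mul_degree_le hk hP hv h1 h2
    exact ⟨hlt.le, fun h => absurd h hlt.ne⟩
  · simp only [not_exists, not_le] at hlow
    obtain ⟨R, ⟨x, hx⟩, hRk, hR⟩ := exists_finset_closed_of_lt_two_mul_degree hP hlow
    obtain ⟨h1, h2⟩ := ih _
      (Fintype.card_subtype_lt (p := (· ∈ ((↑R)ᶜ : Set V))) (x := x) (by simpa using hx))
      (G := G.induce (↑R)ᶜ) (hP' _) rfl
    exact two_mul_card_edgeFinset_le_of_closed hR ⟨x, hx⟩ hRk h1 h2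

theorem insert_neighborFinset_eq_iff (hcl : ∀ v, G.IsClique (G.neighborSet v)) {u v : V} :
    insert u (G.neighborFinset u) = insert v (G.neighborFinset v) ↔ u = v ∨ G.Adj u v := by
  have hsub (a b : V) (hab : G.Adj a b) :
      insert a (G.neighborFinset a) ⊆ insert b (G.neighborFinset b) := by
    intro w hw
    simp only [Finset.mem_insert, mem_neighborFinset] at hw ⊢
    rcases hw with rfl | haw
    · exact Or.inr hab.symm
    · by_cases hwb : w = b
      · exact Or.inl hwb
      · exact Or.inr (hcl a hab haw (Ne.symm hwb))
  constructor
  · intro h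
    have hu : u ∈ insert v (G.neighborFinset v) := h ▸ Finset.mem_insert_self u _
    simpa [eq_comm (a := v), G.adj_comm v] using hu
  · rintro (rfl | h)
    · rfl
    · exact (hsub u v h).antisymm (hsub v u h.symm)

theorem exists_labelling_of_isRegularOfDegree (hreg : G.IsRegularOfDegree k)
    (hcl : ∀ v, G.IsClique (G.neighborSet v)) :
    ∃ f : V → ℕ, (∀ u v, G.Adj u v ↔ u ≠ v ∧ f u = f v) ∧
      ∀ u, #{v | f v = f u} = k + 1 := by
  set f : V → ℕ := fun u => Fintype.equivFin (Finset V) (insert u (G.neighborFinset u))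
  have hf (u v : V) : f u = f v ↔ u = v ∨ G.Adj u v := by
    simp only [f, Fin.val_inj, EmbeddingLike.apply_eq_iff_eq, insert_neighborFinset_eq_iff hcl]
  refine ⟨f, fun u v => ?_, fun u => ?_⟩
  · rw [hf]
    exact ⟨fun h => ⟨h.ne, Or.inr h⟩, fun ⟨hne, h⟩ => h.resolve_left hne⟩
  · have : ({v | f v = f u} : Finset V) = insert u (G.neighborFinset u) := by
      ext v
      simp [hf, G.adj_comm]
    rw [this, Finset.card_insert_of_notMem (by simp), G.card_neighborFinset_eq_degree,
      hreg.degree_eq]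

theorem isRegularOfDegree_of_labelling {f : V → ℕ}
    (hf : ∀ u v, G.Adj u v ↔ u ≠ v ∧ f u = f v)
    (hc : ∀ u, #{v | f v = f u} = k + 1) : G.IsRegularOfDegree k := fun u => by
  have : G.neighborFinset u = ({v | f v = f u} : Finset V).erase u := by
    ext v
    simp [hf, eq_comm, and_comm]
  rw [← G.card_neighborFinset_eq_degree, this, Finset.card_erase_of_mem (by simp), hc,
    Nat.add_sub_cancel]

end

theorem stmt0 {n k : ℕ} (hk : 1 ≤ k) (G : SimpleGraph (Fin n)) [DecidableRel G.Adj]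
    (hP : ¬ HasPathOn G (k + 2)) :
    (G.edgeFinset.card : ℝ) ≤ k * n / 2 ∧
      ((G.edgeFinset.card : ℝ) = k * n / 2 ↔
        ∃ f : Fin n → ℕ, (∀ u v, G.Adj u v ↔ u ≠ v ∧ f u = f v) ∧
          ∀ u, (Finset.univ.filter fun v => f v = f u).card = k + 1) := by
  obtain ⟨hle, heq⟩ := two_mul_card_edgeFinset_le_of_not_hasPathOn hk hP
  rw [Fintype.card_fin] at hle heq
  have hreal : (#G.edgeFinset : ℝ) = k * n / 2 ↔ 2 * #G.edgeFinset = k * n := by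
    rw [eq_div_iff two_ne_zero, mul_comm]
    exact_mod_cast Iff.rfl
  refine ⟨?_, hreal.trans ⟨fun h => exists_labelling_of_isRegularOfDegree (heq h).1 (heq h).2,
    fun ⟨f, hf, hc⟩ => ?_⟩⟩
  · rw [le_div_iff₀ two_pos, mul_comm]
    exact_mod_cast hle
  · simpa using (isRegularOfDegree_of_labelling hf hc).two_mul_card_edgeFinset
end

section
/- For every simple graph G, the largest eigenvalue q(G) of the signless Laplacian Q(G) satisfies q(G) ≤ max over vertices u of [ d(u) + (1/d(u)) · Σ_{v ∈ Γ(u)} d(v) ], where the maximum is over vertices u of positive degree (and q(G) = 0 if G has no edges). -/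
open Finset

/-!
Let `x` be an eigenvector for `q = q(G)` and put `w v = max (d v) 1`. At a vertex `u` maximising
`|x u| / w u`, the eigen-equation `q x u = d u x u + ∑_{v ∼ u} x v` gives
`q w u ≤ d u w u + ∑_{v ∼ u} w v`: the row-sum bound for the similar matrix `diag(w)⁻¹ Q diag(w)`.
When `q > 0` such a `u` cannot be isolated, and then `w = d` at `u` and at all its neighbours.
-/

namespace Matrix

variable {ι : Type*} [Fintype ι]

theorem exists_mulVec_eq_smul_of_mem_spectrum [DecidableEq ι] {A : Matrix ι ι ℝ} {μ : ℝ}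
    (hμ : μ ∈ spectrum ℝ A) : ∃ x ≠ 0, A *ᵥ x = μ • x := by
  rw [← spectrum_toLin', ← Module.End.hasEigenvalue_iff_mem_spectrum] at hμ
  obtain ⟨x, hx, hx0⟩ := hμ.exists_hasEigenvector
  exact ⟨x, hx0, by simpa using Module.End.mem_eigenspace_iff.mp hx⟩

theorem exists_abs_mul_le_sum_abs_mul {A : Matrix ι ι ℝ} {μ : ℝ} {x : ι → ℝ} (hx : x ≠ 0)
    (hAx : A *ᵥ x = μ • x) {w : ι → ℝ} (hw : ∀ i, 0 < w i) :
    ∃ i, |μ| * w i ≤ ∑ j, |A i j| * w j := by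
  set y : ι → ℝ := fun i => x i / w i
  have hxy : ∀ i, x i = w i * y i := fun i => by simp [y, mul_div_cancel₀ _ (hw i).ne']
  obtain ⟨k, hk⟩ := Function.ne_iff.mp hx
  have : Nonempty ι := ⟨k⟩
  obtain ⟨i, -, hi⟩ := exists_max_image univ (fun i => |y i|) univ_nonempty
  have hyi : 0 < |y i| :=
    (abs_pos.mpr (div_ne_zero hk (hw k).ne')).trans_le (hi k (mem_univ k))
  refine ⟨i, le_of_mul_le_mul_right ?_ hyi⟩
  have hrow : μ * x i = ∑ j, A i j * x j := by
    simpa [mulVec, dotProduct] using (congrFun hAx i).symm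
  calc |μ| * w i * |y i| = |∑ j, A i j * x j| := by
        rw [← hrow, hxy i, abs_mul, abs_mul, abs_of_pos (hw i), mul_assoc]
    _ ≤ ∑ j, |A i j| * w j * |y j| := by
        refine (abs_sum_le_sum_abs _ _).trans_eq (sum_congr rfl fun j _ => ?_)
        rw [hxy j, abs_mul, abs_mul, abs_of_pos (hw j), mul_assoc]
    _ ≤ ∑ j, |A i j| * w j * |y i| :=
        sum_le_sum fun j _ => mul_le_mul_of_nonneg_left (hi j (mem_univ j))
          (mul_nonneg (abs_nonneg _) (hw j).le)
    _ = (∑ j, |A i j| * w j) * |y i| := (sum_mul _ _ _).symm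

end Matrix

section SignlessLaplacian

open Matrix

variable {n : ℕ} (G : SimpleGraph (Fin n)) [DecidableRel G.Adj]

theorem signlessLaplacian_nonneg (i j : Fin n) : 0 ≤ signlessLaplacian G i j := by
  simp only [signlessLaplacian, Matrix.add_apply, diagonal_apply, SimpleGraph.adjMatrix_apply]
  split_ifs <;> positivity

theorem signlessLaplacian_isHermitian : (signlessLaplacian G).IsHermitian := by
  ext i j
  by_cases h : i = j
  · subst h; rfl
  · simp [signlessLaplacian, h, Ne.symm h, G.adj_comm]

theorem signlessLaplacian_mulVec_apply (x : Fin n → ℝ) (u : Fin n) :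
    (signlessLaplacian G *ᵥ x) u = G.degree u * x u + ∑ v ∈ G.neighborFinset u, x v := by
  simp [signlessLaplacian, add_mulVec, mulVec_diagonal, SimpleGraph.adjMatrix_mulVec_apply]

theorem qIndex_mem_spectrum [NeZero n] : qIndex G ∈ spectrum ℝ (signlessLaplacian G) :=
  Set.Nonempty.csSup_mem ⟨_, (signlessLaplacian_isHermitian G).eigenvalues_mem_spectrum_real 0⟩
    (finite_spectrum _)

theorem exists_mul_le_degree_mul_add_sum_of_mem_spectrum {μ : ℝ}
    (hμ : μ ∈ spectrum ℝ (signlessLaplacian G)) {w : Fin n → ℝ} (hw : ∀ i, 0 < w i) :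
    ∃ u, μ * w u ≤ G.degree u * w u + ∑ v ∈ G.neighborFinset u, w v := by
  obtain ⟨x, hx, hQx⟩ := exists_mulVec_eq_smul_of_mem_spectrum hμ
  obtain ⟨u, hu⟩ := exists_abs_mul_le_sum_abs_mul hx hQx hw
  refine ⟨u, ?_⟩
  calc μ * w u ≤ |μ| * w u := mul_le_mul_of_nonneg_right (le_abs_self μ) (hw u).le
    _ ≤ ∑ j, |signlessLaplacian G u j| * w j := hu
    _ = G.degree u * w u + ∑ v ∈ G.neighborFinset u, w v := by
        simp_rw [abs_of_nonneg (signlessLaplacian_nonneg G u _), ← signlessLaplacian_mulVec_apply]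
        rfl

theorem qIndex_eq_zero_of_edgeFinset_eq_empty (h : G.edgeFinset = ∅) : qIndex G = 0 := by
  have hG : G = ⊥ := SimpleGraph.edgeFinset_eq_empty.mp h
  subst hG
  have : signlessLaplacian (⊥ : SimpleGraph (Fin n)) = 0 := by
    ext i j
    simp [signlessLaplacian]
  rw [qIndex, this]
  rcases isEmpty_or_nonempty (Fin n) with _ | _
  · rw [spectrum.of_subsingleton, Real.sSup_empty]
  · rw [spectrum.zero_eq, csSup_singleton]

theorem degree_pos_and_le_of_mul_max_le {μ : ℝ} (hμ : 0 < μ) {u : Fin n}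
    (h : μ * max (G.degree u : ℝ) 1 ≤
      G.degree u * max (G.degree u : ℝ) 1 + ∑ v ∈ G.neighborFinset u, max (G.degree v : ℝ) 1) :
    0 < G.degree u ∧
      μ ≤ G.degree u + 1 / (G.degree u : ℝ) * ∑ v ∈ G.neighborFinset u, (G.degree v : ℝ) := by
  have hdu : 0 < G.degree u := by
    by_contra! h0
    have hΓ : G.neighborFinset u = ∅ := by
      rw [← card_eq_zero, G.card_neighborFinset_eq_degree]
      omega
    rw [Nat.le_zero.mp h0, hΓ] at h
    norm_num at h
    linarith
  have hd : (0 : ℝ) < G.degree u := by exact_mod_cast hdu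
  have hN : ∀ v ∈ G.neighborFinset u, max (G.degree v : ℝ) 1 = G.degree v := fun v hv => by
    have : 0 < G.degree v :=
      (G.degree_pos_iff_exists_adj v).mpr ⟨u, (G.adj_comm u v).mp (by simpa using hv)⟩
    exact max_eq_left (by exact_mod_cast this)
  rw [max_eq_left (by exact_mod_cast hdu), sum_congr rfl hN] at h
  refine ⟨hdu, le_of_mul_le_mul_right ?_ hd⟩
  calc μ * G.degree u ≤ G.degree u * G.degree u + ∑ v ∈ G.neighborFinset u, (G.degree v : ℝ) := h
    _ = _ := by field_simp

end SignlessLaplacian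

theorem stmt3 {n : ℕ} (G : SimpleGraph (Fin n)) [DecidableRel G.Adj] :
    (G.edgeFinset.Nonempty →
      ∃ u, 0 < G.degree u ∧
        qIndex G ≤ (G.degree u : ℝ) +
          (1 / (G.degree u : ℝ)) * ∑ v ∈ G.neighborFinset u, (G.degree v : ℝ)) ∧
    (G.edgeFinset = ∅ → qIndex G = 0) := by
  refine ⟨fun ⟨e, he⟩ => ?_, qIndex_eq_zero_of_edgeFinset_eq_empty G⟩
  induction e using Sym2.ind with | _ a b => ?_
  have ha : 0 < G.degree a := (G.degree_pos_iff_exists_adj a).mpr ⟨b, G.mem_edgeFinset.mp he⟩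
  have : NeZero n := NeZero.of_pos a.pos
  obtain ⟨u, hu⟩ := exists_mul_le_degree_mul_add_sum_of_mem_spectrum G (qIndex_mem_spectrum G)
    (w := fun v => max (G.degree v : ℝ) 1) fun _ => by positivity
  rcases le_or_gt (qIndex G) 0 with hq | hq
  · exact ⟨a, ha, hq.trans (by positivity)⟩
  · exact ⟨u, degree_pos_and_le_of_mul_max_le G hq hu⟩
end

section
/- Let k ≥ 2 and n > 5k². Then the largest signless Laplacian eigenvalue of S_{n,k} satisfies q(S_{n,k}) > n + 2k − 2 − 2k(k−1)/(n+2k−3); in particular q(S_{n,k}) > n + 2k − 3. -/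
/-!
The vector equal to `a` on the clique and to `b` on the independent set is mapped by the signless
Laplacian to a vector of the same shape, via the quotient matrix `[[n + k - 2, n - k], [k, k]]`.
Hence every root `μ` of its characteristic polynomial `μ² - (n + 2k - 2) μ + 2k(k - 1)` is an
eigenvalue of `Q(S_{n,k})`. With `p = n + 2k - 2` and `c = 2k(k - 1) < p - 1` the larger root
exceeds `p - 1`, and then `μ = p - c / μ > p - c / (p - 1)`.
-/

open Finset

open Matrix

theorem Matrix.mem_spectrum_of_mulVec_eq_smul {ι K : Type*} [Fintype ι] [DecidableEq ι] [Field K]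
    {A : Matrix ι ι K} {μ : K} {v : ι → K} (hv : v ≠ 0) (h : A *ᵥ v = μ • v) :
    μ ∈ spectrum K A := by
  rw [← Matrix.spectrum_toLin', ← Module.End.hasEigenvalue_iff_mem_spectrum]
  exact Module.End.hasEigenvalue_of_hasEigenvector
    ⟨Module.End.mem_eigenspace_iff.mpr (by simpa using h), hv⟩

theorem le_qIndex_of_mem_spectrum {n : ℕ} {G : SimpleGraph (Fin n)} [DecidableRel G.Adj] {μ : ℝ}
    (h : μ ∈ spectrum ℝ (signlessLaplacian G)) : μ ≤ qIndex G :=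
  le_csSup (Matrix.finite_spectrum _).bddAbove h

theorem exists_quadratic_root_gt_sub_div {p c : ℝ} (hc : 0 < c) (hcp : c < p - 1) :
    ∃ μ, μ ^ 2 - p * μ + c = 0 ∧ p - c / (p - 1) < μ := by
  have hdisc : (p - 2) ^ 2 < p ^ 2 - 4 * c := by nlinarith
  set s := Real.sqrt (p ^ 2 - 4 * c)
  have hs : s ^ 2 = p ^ 2 - 4 * c := Real.sq_sqrt (by nlinarith)
  have hroot : ((p + s) / 2) ^ 2 - p * ((p + s) / 2) + c = 0 := by linear_combination hs / 4
  have hgt : p - 1 < (p + s) / 2 := by linarith [Real.lt_sqrt_of_sq_lt hdisc]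
  refine ⟨(p + s) / 2, hroot, ?_⟩
  -- `μ (p - μ) = c`, so `p - μ = c / μ < c / (p - 1)`.
  have hμpos : 0 < (p + s) / 2 := by linarith
  have hdiff : p - (p + s) / 2 = c / ((p + s) / 2) := by
    rw [eq_div_iff hμpos.ne']; linear_combination -hroot
  linarith [div_lt_div_of_pos_left hc (by linarith) hgt]

namespace Snk

variable {n k : ℕ}

theorem adj_iff {i j : Fin n} : (Snk n k).Adj i j ↔ i ≠ j ∧ (i.val < k ∨ j.val < k) := Iff.rfl

theorem neighborFinset_of_lt {i : Fin n} (hi : i.val < k) :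
    (Snk n k).neighborFinset i = univ.erase i := by
  ext j
  simp only [SimpleGraph.mem_neighborFinset, adj_iff, mem_erase, mem_univ, and_true]
  exact ⟨fun h => Ne.symm h.1, fun h => ⟨h.symm, Or.inl hi⟩⟩

theorem neighborFinset_of_le {i : Fin n} (hi : k ≤ i.val) :
    (Snk n k).neighborFinset i = univ.filter (fun j : Fin n => j.val < k) := by
  ext j
  simp only [SimpleGraph.mem_neighborFinset, adj_iff, mem_filter, mem_univ, true_and]
  constructor
  · rintro ⟨-, h | h⟩
    · omega
    · exact h
  · rintro h
    exact ⟨by rintro rfl; omega, Or.inr h⟩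

def blockVector (n k : ℕ) (a b : ℝ) : Fin n → ℝ := fun i => if i.val < k then a else b

theorem sum_blockVector_filter_lt (hkn : k ≤ n) (a b : ℝ) :
    ∑ j ∈ univ.filter (fun j : Fin n => j.val < k), blockVector n k a b j = k * a := by
  have h : ∀ j ∈ univ.filter (fun j : Fin n => j.val < k), blockVector n k a b j = a :=
    fun j hj => if_pos (mem_filter.mp hj).2
  rw [sum_eq_card_nsmul h, Fin.card_filter_val_lt, min_eq_right hkn, nsmul_eq_mul]

theorem sum_blockVector (hkn : k ≤ n) (a b : ℝ) :
    ∑ j, blockVector n k a b j = k * a + (n - k) * b := by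
  unfold blockVector
  rw [sum_ite, sum_const, sum_const, Fin.card_filter_val_lt, filter_not, card_sdiff, inter_univ,
    Fin.card_filter_val_lt, card_univ, Fintype.card_fin, min_eq_right hkn, nsmul_eq_mul,
    nsmul_eq_mul, Nat.cast_sub hkn]

theorem signlessLaplacian_mulVec_blockVector (hkn : k ≤ n) (a b : ℝ) (i : Fin n) :
    (signlessLaplacian (Snk n k) *ᵥ blockVector n k a b) i =
      if i.val < k then (n + k - 2) * a + (n - k) * b else k * a + k * b := by
  rw [signlessLaplacian, add_mulVec, Pi.add_apply, mulVec_diagonal,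
    SimpleGraph.adjMatrix_mulVec_apply, ← SimpleGraph.card_neighborFinset_eq_degree]
  split_ifs with hi
  · have hv : blockVector n k a b i = a := if_pos hi
    rw [neighborFinset_of_lt hi, card_erase_of_mem (mem_univ i), sum_erase_eq_sub (mem_univ i),
      sum_blockVector hkn, hv, card_univ, Fintype.card_fin, Nat.cast_sub i.pos]
    ring
  · have hv : blockVector n k a b i = b := if_neg hi
    rw [neighborFinset_of_le (not_lt.mp hi), sum_blockVector_filter_lt hkn,
      Fin.card_filter_val_lt, min_eq_right hkn, hv]
    ring

theorem mem_spectrum_signlessLaplacian (hk : 0 < k) (hkn : k < n) {μ : ℝ}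
    (hμ : μ ^ 2 - (n + 2 * k - 2) * μ + 2 * k * (k - 1) = 0) :
    μ ∈ spectrum ℝ (signlessLaplacian (Snk n k)) := by
  set v := blockVector n k (n - k) (μ - (n + k - 2))
  have hv : v ≠ 0 := fun h0 => by
    have h := congrFun h0 ⟨0, by omega⟩
    simp only [v, blockVector, if_pos hk, Pi.zero_apply, sub_eq_zero] at h
    exact hkn.ne' (by exact_mod_cast h)
  refine mem_spectrum_of_mulVec_eq_smul hv (funext fun i => ?_)
  rw [signlessLaplacian_mulVec_blockVector hkn.le, Pi.smul_apply, smul_eq_mul]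
  simp only [v, blockVector]
  split_ifs
  · ring
  · linear_combination -hμ

end Snk

theorem stmt5 {n k : ℕ} (hk : 2 ≤ k) (hn : 5 * k ^ 2 < n) :
    (n : ℝ) + 2 * k - 2 - 2 * k * ((k : ℝ) - 1) / ((n : ℝ) + 2 * k - 3) < qIndex (Snk n k) ∧
      (n : ℝ) + 2 * k - 3 < qIndex (Snk n k) := by
  have hkR : (2 : ℝ) ≤ k := by exact_mod_cast hk
  have hnR : 5 * (k : ℝ) ^ 2 < n := by exact_mod_cast hn
  have hc : (0 : ℝ) < 2 * k * (k - 1) := by nlinarith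
  have hcp : 2 * k * ((k : ℝ) - 1) < n + 2 * k - 3 := by nlinarith
  obtain ⟨μ, hroot, hμ⟩ :=
    exists_quadratic_root_gt_sub_div (p := n + 2 * k - 2) hc (by linarith)
  rw [show (n : ℝ) + 2 * k - 2 - 1 = n + 2 * k - 3 by ring] at hμ
  have hq : μ ≤ qIndex (Snk n k) :=
    le_qIndex_of_mem_spectrum (Snk.mem_spectrum_signlessLaplacian (by omega) (by nlinarith) hroot)
  have hfrac : 2 * k * ((k : ℝ) - 1) / (n + 2 * k - 3) < 1 := (div_lt_one (by linarith)).mpr hcp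
  exact ⟨by linarith, by linarith⟩
end

section
/- Let G be a graph of order n with e(G) ≥ (k−1)n − (k² − k − 1). If G contains no path P_{2k}, then G has an induced subgraph H with minimum degree δ(H) ≥ k − 1 and at least n − (k² − k − 1) vertices. -/
open Finset

/-!
Erdős–Gallai: a `P_{2k}`-free graph on `m` vertices has at most `(k - 1) m` edges. Delete vertices
of degree `< k` one at a time (each costs at most `k - 1` edges) and split disconnected graphs;
what is left is connected with minimum degree `≥ k`. There a longest path has all neighbours of
its endpoints on it, so two of them interleave and Pósa's rotation closes the path into a cycle
on its vertex set; by connectivity the path then spans the graph, which therefore has fewer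
than `2k` vertices and trivially few edges.

Now peel off vertices of degree `< k - 1` from `G`. If `r` vertices go, the remaining graph `H`
keeps at least `e(G) - r (k - 2)` edges, while `e(H) ≤ (k - 1)(n - r)` by Erdős–Gallai; with
the assumed lower bound on `e(G)` this forces `r ≤ k² - k - 1`.
-/

namespace List

variable {α : Type*} {R : α → α → Prop}

/-- The ways to cut `l` into two nonempty parts are indexed by `Ioo 0 l.length`; `s` injects
into them by "cut just before `x`" and `t` by "cut just after `y`". -/
theorem exists_eq_append_of_card_le [DecidableEq α] {l : List α} {s t : Finset α}
    (hs : ∀ x ∈ s, x ∈ l ∧ l.head? ≠ some x) (ht : ∀ y ∈ t, y ∈ l ∧ l.getLast? ≠ some y)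
    (hl : l ≠ []) (hcard : l.length ≤ #s + #t) :
    ∃ a b, l = a ++ b ∧ (∃ x ∈ b.head?, x ∈ s) ∧ ∃ y ∈ a.getLast?, y ∈ t := by
  have hI : ∀ x ∈ s, idxOf x l ∈ Ioo 0 l.length := by
    intro x hx
    obtain ⟨hxl, hhead⟩ := hs x hx
    have hlt := idxOf_lt_length_iff.2 hxl
    refine mem_Ioo.2 ⟨Nat.pos_of_ne_zero fun h0 => hhead ?_, hlt⟩
    rw [head?_eq_getElem?, ← h0, getElem?_eq_getElem hlt, getElem_idxOf]
  have hJ : ∀ y ∈ t, idxOf y l + 1 ∈ Ioo 0 l.length := by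
    intro y hy
    obtain ⟨hyl, hlast⟩ := ht y hy
    have hlt := idxOf_lt_length_iff.2 hyl
    refine mem_Ioo.2 ⟨Nat.succ_pos _, lt_of_le_of_ne hlt fun h => hlast ?_⟩
    rw [getLast?_eq_getElem?, ← h, Nat.add_sub_cancel, getElem?_eq_getElem hlt, getElem_idxOf]
  have hinj : ∀ u ∈ l, ∀ v ∈ l, idxOf u l = idxOf v l → u = v :=
    fun u hu v _ h => (idxOf_inj hu).1 h
  obtain ⟨j, hj⟩ : (s.image (idxOf · l) ∩ t.image (idxOf · l + 1)).Nonempty := by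
    rw [← card_pos]
    have hsub := card_le_card (union_subset (image_subset_iff.2 hI) (image_subset_iff.2 hJ))
    have := card_union_add_card_inter (s.image (idxOf · l)) (t.image (idxOf · l + 1))
    rw [card_image_of_injOn fun u hu v hv h => hinj u (hs u hu).1 v (hs v hv).1 h,
      card_image_of_injOn fun u hu v hv h => hinj u (ht u hu).1 v (ht v hv).1 (by simpa using h)]
      at this
    simp only [Nat.card_Ioo] at hsub
    have := length_pos_iff.2 hl
    omega
  obtain ⟨hjs, hjt⟩ := mem_inter.1 hj
  obtain ⟨x, hx, rfl⟩ := mem_image.1 hjs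
  obtain ⟨y, hy, hxy⟩ := mem_image.1 hjt
  have hxl := idxOf_lt_length_iff.2 (hs x hx).1
  have hyl := idxOf_lt_length_iff.2 (ht y hy).1
  refine ⟨l.take (idxOf x l), l.drop (idxOf x l), (take_append_drop _ _).symm,
    ⟨x, ?_, hx⟩, ⟨y, ?_, hy⟩⟩
  · rw [head?_drop, getElem?_eq_getElem hxl, getElem_idxOf]
    rfl
  · rw [getLast?_take, ← hxy, if_neg (Nat.succ_ne_zero _), Nat.add_sub_cancel,
      getElem?_eq_getElem hyl, getElem_idxOf]
    rfl

/-- Pósa's rotation: the chords `v₀ vᵢ₊₁` and `vᵢ vₘ` of a path `v₀ … vᵢ vᵢ₊₁ … vₘ` close it into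
the cycle `v₀ … vᵢ vₘ … vᵢ₊₁`. -/
theorem cycleChain_append_reverse [Std.Symm R] {a b : List α} {x y : α}
    (h : (a ++ b).IsChain R) (hx : x ∈ b.head?) (hy : y ∈ a.getLast?)
    (hxh : ∀ u ∈ (a ++ b).head?, R u x) (hyl : ∀ v ∈ (a ++ b).getLast?, R y v) :
    Cycle.Chain R (a ++ b.reverse : List α) := by
  have ha : a ≠ [] := by rintro rfl; simp at hy
  have hb : b ≠ [] := by rintro rfl; simp at hx
  have hb' : b.reverse ≠ [] := by simpa using hb
  rw [Cycle.chain_ne_nil _ (append_ne_nil_of_right_ne_nil a hb')]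
  have hlast : (a ++ b.reverse).getLast (append_ne_nil_of_right_ne_nil a hb') = x := by
    rw [getLast_append_of_right_ne_nil _ _ hb', getLast_reverse]
    simpa [head?_eq_some_head hb] using hx
  rw [hlast, ← cons_append]
  refine IsChain.append ?_ ?_ ?_
  · refine h.left_of_append.cons fun u hu => Std.Symm.symm _ _ (hxh u ?_)
    rwa [head?_append_of_ne_nil _ ha]
  · exact isChain_reverse.2 (h.right_of_append.imp fun _ _ huv => Std.Symm.symm _ _ huv)
  · intro u hu v hv
    rw [getLast?_cons, hy] at hu
    rw [head?_reverse] at hv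
    simp only [Option.getD_some, Option.mem_def, Option.some.injEq] at hu
    subst hu
    exact hyl v (by rw [getLast?_append, hv]; rfl)

theorem exists_perm_cons_isChain {c : List α} (hc : Cycle.Chain R c) {x y : α} (hy : y ∈ c)
    (hxy : R x y) : ∃ l, l ~ x :: c ∧ l.IsChain R := by
  obtain ⟨c₁, c₂, rfl⟩ := append_of_mem hy
  have hrot : Cycle.Chain R (y :: (c₂ ++ c₁) : List α) := by
    rwa [← cons_append, Cycle.coe_eq_coe.2 isRotated_append]
  rw [Cycle.chain_coe_cons, ← cons_append] at hrot
  exact ⟨x :: y :: (c₂ ++ c₁), perm_cons x |>.2 (perm_append_comm : (y :: c₂) ++ c₁ ~ _),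
    hrot.left_of_append.cons fun _ hz => by simp_all⟩

end List

namespace SimpleGraph

variable {V : Type*} {G : SimpleGraph V}

theorem hasPathOn_length_of_isChain {l : List V} (hnd : l.Nodup) (hc : l.IsChain G.Adj) :
    HasPathOn G l.length :=
  ⟨l.get, List.nodup_iff_injective_get.1 hnd, fun i h => List.isChain_iff_getElem.1 hc i h⟩

variable (G) in
structure IsPathIn (s : Finset V) (l : List V) : Prop where
  nodup : l.Nodup
  isChain : l.IsChain G.Adj
  mem : ∀ v ∈ l, v ∈ s

variable (G) in
def IsLongestPathIn (s : Finset V) (l : List V) : Prop :=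
  G.IsPathIn s l ∧ ∀ l', G.IsPathIn s l' → l'.length ≤ l.length

variable (G) in
/-- Connectivity of `G.induce s`, phrased through cuts. -/
def IsConnectedIn (s : Finset V) : Prop :=
  ∀ t ⊂ s, t.Nonempty → ∃ x ∈ s, x ∉ t ∧ ∃ y ∈ t, G.Adj x y

variable {s : Finset V} {l : List V}

theorem IsPathIn.length_le [DecidableEq V] (hl : G.IsPathIn s l) : l.length ≤ #s := by
  rw [← List.toFinset_card_of_nodup hl.nodup]
  exact card_le_card fun v hv => hl.mem v (List.mem_toFinset.1 hv)

theorem IsPathIn.reverse (hl : G.IsPathIn s l) : G.IsPathIn s l.reverse :=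
  ⟨List.nodup_reverse.2 hl.nodup, List.isChain_reverse.2 (hl.isChain.imp fun _ _ h => h.symm),
    fun v hv => hl.mem v (List.mem_reverse.1 hv)⟩

variable (G) in
theorem exists_isLongestPathIn [DecidableEq V] (s : Finset V) : ∃ l, G.IsLongestPathIn s l := by
  classical
  let P (m : ℕ) : Prop := ∃ l, G.IsPathIn s l ∧ l.length = m
  obtain ⟨l, hl, hlen⟩ : P (Nat.findGreatest P #s) :=
    Nat.findGreatest_spec (Nat.zero_le _) ⟨[], ⟨List.nodup_nil, List.IsChain.nil, by simp⟩, rfl⟩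
  exact ⟨l, hl, fun l' hl' => hlen ▸ Nat.le_findGreatest hl'.length_le ⟨l', hl', rfl⟩⟩

namespace IsLongestPathIn

theorem reverse (hl : G.IsLongestPathIn s l) : G.IsLongestPathIn s l.reverse :=
  ⟨hl.1.reverse, fun l' hl' => by simpa using hl.2 l' hl'⟩

theorem mem_of_adj_head (hl : G.IsLongestPathIn s l) {v w : V} (hv : v ∈ l.head?) (hw : w ∈ s)
    (hvw : G.Adj v w) : w ∈ l := by
  by_contra hwl
  have hpath : G.IsPathIn s (w :: l) :=
    ⟨List.nodup_cons.2 ⟨hwl, hl.1.nodup⟩, hl.1.isChain.cons fun u hu => by simp_all [G.adj_comm],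
      List.forall_mem_cons.2 ⟨hw, hl.1.mem⟩⟩
  simpa using hl.2 _ hpath

theorem mem_of_adj_getLast (hl : G.IsLongestPathIn s l) {v w : V} (hv : v ∈ l.getLast?)
    (hw : w ∈ s) (hvw : G.Adj v w) : w ∈ l :=
  List.mem_reverse.1 <| hl.reverse.mem_of_adj_head (by rwa [List.head?_reverse]) hw hvw

/-- Otherwise an edge from outside into the cycle, followed around it, gives a longer path. -/
theorem card_le_length_of_cycleChain [DecidableEq V] (hl : G.IsLongestPathIn s l)
    (hconn : G.IsConnectedIn s) (hne : l ≠ [])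
    {c : List V} (hc : c.Perm l) (hcyc : Cycle.Chain G.Adj c) : #s ≤ l.length := by
  by_contra! hlt
  have hsub : l.toFinset ⊂ s := by
    refine ⟨fun v hv => hl.1.mem v (List.mem_toFinset.1 hv), fun hsl => hlt.not_ge ?_⟩
    simpa [List.toFinset_card_of_nodup hl.1.nodup] using card_le_card hsl
  obtain ⟨x, hxs, hxl, y, hy, hxy⟩ := hconn _ hsub (List.toFinset_nonempty_iff _ |>.2 hne)
  rw [List.mem_toFinset] at hxl
  obtain ⟨l', hperm, hchain⟩ :=
    List.exists_perm_cons_isChain hcyc (hc.mem_iff.2 (List.mem_toFinset.1 hy)) hxy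
  have hperm' : l'.Perm (x :: l) := hperm.trans (hc.cons x)
  have hpath : G.IsPathIn s l' :=
    ⟨hperm'.nodup_iff.2 (List.nodup_cons.2 ⟨hxl, hl.1.nodup⟩), hchain, fun v hv => by
      rcases List.mem_cons.1 (hperm'.mem_iff.1 hv) with rfl | hv
      exacts [hxs, hl.1.mem v hv]⟩
  simpa [hperm'.length_eq] using hl.2 l' hpath

end IsLongestPathIn

variable [DecidableRel G.Adj]

variable (G) in
def degreeIn (s : Finset V) (v : V) : ℕ := #{w ∈ s | G.Adj v w}

theorem degreeIn_lt_card {v : V} (hv : v ∈ s) : G.degreeIn s v < #s :=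
  card_lt_card ⟨filter_subset _ _, fun h => G.irrefl (mem_filter.1 (h hv)).2⟩

theorem IsLongestPathIn.exists_perm_cycleChain [DecidableEq V] (hl : G.IsLongestPathIn s l)
    (hne : l ≠ []) {v₀ v₁ : V} (hv₀ : v₀ ∈ l.head?) (hv₁ : v₁ ∈ l.getLast?)
    (hdeg : l.length ≤ G.degreeIn s v₀ + G.degreeIn s v₁) :
    ∃ c : List V, c.Perm l ∧ Cycle.Chain G.Adj c := by
  have hN₀ : ∀ w ∈ {w ∈ s | G.Adj v₀ w}, w ∈ l ∧ l.head? ≠ some w := fun w hw => by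
    obtain ⟨hws, hadj⟩ := mem_filter.1 hw
    exact ⟨hl.mem_of_adj_head hv₀ hws hadj, fun h => hadj.ne (Option.mem_unique hv₀ h)⟩
  have hN₁ : ∀ w ∈ {w ∈ s | G.Adj v₁ w}, w ∈ l ∧ l.getLast? ≠ some w := fun w hw => by
    obtain ⟨hws, hadj⟩ := mem_filter.1 hw
    exact ⟨hl.mem_of_adj_getLast hv₁ hws hadj, fun h => hadj.ne (Option.mem_unique hv₁ h)⟩
  obtain ⟨a, b, rfl, ⟨x, hx, hxN⟩, ⟨y, hy, hyN⟩⟩ :=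
    List.exists_eq_append_of_card_le hN₀ hN₁ hne hdeg
  have := G.symm
  refine ⟨a ++ b.reverse, (List.reverse_perm b).append_left a,
    List.cycleChain_append_reverse hl.1.isChain hx hy (fun u hu => ?_) (fun u hu => ?_)⟩
  · exact Option.mem_unique hv₀ hu ▸ (mem_filter.1 hxN).2
  · exact Option.mem_unique hv₁ hu ▸ (mem_filter.1 hyN).2.symm

theorem hasPathOn_two_mul_of_le_degreeIn [DecidableEq V] {k : ℕ}
    (hdeg : ∀ v ∈ s, k ≤ G.degreeIn s v)
    (hconn : G.IsConnectedIn s) (hs : 2 * k ≤ #s) :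
    HasPathOn G (2 * k) := by
  obtain ⟨l, hl⟩ := G.exists_isLongestPathIn s
  by_cases hlong : 2 * k ≤ l.length
  · simpa [hlong] using hasPathOn_length_of_isChain
      (hl.1.nodup.sublist (List.take_sublist (2 * k) l)) (hl.1.isChain.take (2 * k))
  have hne : l ≠ [] := by
    rintro rfl
    obtain ⟨v, hv⟩ : s.Nonempty := card_pos.1 (by omega)
    simpa using hl.2 [v] ⟨List.nodup_singleton v, List.isChain_singleton v, by simpa⟩
  obtain ⟨v₀, hv₀⟩ : ∃ v, v ∈ l.head? := ⟨l.head hne, List.head?_eq_some_head hne⟩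
  obtain ⟨v₁, hv₁⟩ : ∃ v, v ∈ l.getLast? := ⟨l.getLast hne, List.getLast?_eq_some_getLast hne⟩
  have hdeg₀ := hdeg v₀ (hl.1.mem v₀ (List.mem_of_mem_head? hv₀))
  have hdeg₁ := hdeg v₁ (hl.1.mem v₁ (List.mem_of_mem_getLast? hv₁))
  obtain ⟨c, hc, hcyc⟩ := hl.exists_perm_cycleChain hne hv₀ hv₁ (by omega)
  exact absurd (hs.trans (hl.card_le_length_of_cycleChain hconn hne hc hcyc)) hlong

section degreeIn

variable [DecidableEq V] {t : Finset V} {v : V}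

theorem degreeIn_erase_add_ite (hv : v ∈ s) (u : V) :
    G.degreeIn (s.erase v) u + (if G.Adj u v then 1 else 0) = G.degreeIn s u := by
  unfold degreeIn
  rw [filter_erase]
  split_ifs with h
  · exact card_erase_add_one (mem_filter.2 ⟨hv, h⟩)
  · rw [erase_eq_of_notMem (by simp [h]), add_zero]

theorem sum_degreeIn_erase (hv : v ∈ s) :
    ∑ u ∈ s, G.degreeIn s u =
      ∑ u ∈ s.erase v, G.degreeIn (s.erase v) u + 2 * G.degreeIn s v := by
  have hcount : ∑ u ∈ s.erase v, (if G.Adj u v then 1 else 0) = G.degreeIn s v := by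
    rw [sum_boole, Nat.cast_id, degreeIn, filter_erase, erase_eq_of_notMem (by simp)]
    simp_rw [G.adj_comm]
  rw [← add_sum_erase s _ hv, ← sum_congr rfl fun u _ => G.degreeIn_erase_add_ite hv u,
    sum_add_distrib, hcount]
  ring

theorem sum_degreeIn_eq_add_sdiff (hts : t ⊆ s) (hsep : ∀ x ∈ s, x ∉ t → ∀ y ∈ t, ¬G.Adj x y) :
    ∑ v ∈ s, G.degreeIn s v = ∑ v ∈ t, G.degreeIn t v + ∑ v ∈ s \ t, G.degreeIn (s \ t) v := by
  rw [← sum_sdiff hts, add_comm]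
  congr 1
  · refine sum_congr rfl fun v hv => congrArg card ?_
    ext w
    simp only [mem_filter]
    refine ⟨fun ⟨hws, hvw⟩ => ⟨?_, hvw⟩, fun ⟨hwt, hvw⟩ => ⟨hts hwt, hvw⟩⟩
    by_contra hwt
    exact hsep w hws hwt v hv hvw.symm
  · refine sum_congr rfl fun v hv => congrArg card ?_
    obtain ⟨hvs, hvt⟩ := mem_sdiff.1 hv
    ext w
    simp only [mem_filter, mem_sdiff]
    exact ⟨fun ⟨hws, hvw⟩ => ⟨⟨hws, fun hwt => hsep v hvs hvt w hwt hvw⟩, hvw⟩,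
      fun ⟨⟨hws, _⟩, hvw⟩ => ⟨hws, hvw⟩⟩

/-- Erdős–Gallai, as `∑ deg ≤ (2k - 2) #s` with the truncated subtraction moved to the left. -/
theorem sum_degreeIn_add_two_mul_card_le {k : ℕ} (hP : ¬HasPathOn G (2 * k)) (s : Finset V) :
    ∑ v ∈ s, G.degreeIn s v + 2 * #s ≤ 2 * k * #s := by
  induction s using Finset.strongInduction with | H s ih =>
  by_cases hlow : ∃ v ∈ s, G.degreeIn s v < k
  · obtain ⟨v, hv, hdeg⟩ := hlow
    have := ih _ (erase_ssubset hv)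
    rw [G.sum_degreeIn_erase hv, ← card_erase_add_one hv]
    linarith
  push Not at hlow
  by_cases hconn : G.IsConnectedIn s
  · by_cases hs : 2 * k ≤ #s
    · exact absurd (G.hasPathOn_two_mul_of_le_degreeIn hlow hconn hs) hP
    calc ∑ v ∈ s, G.degreeIn s v + 2 * #s = ∑ v ∈ s, (G.degreeIn s v + 2) := by
          rw [sum_add_distrib, sum_const, smul_eq_mul, mul_comm]
      _ ≤ ∑ v ∈ s, 2 * k := sum_le_sum fun v hv => by have := G.degreeIn_lt_card hv; omega
      _ = 2 * k * #s := by rw [sum_const, smul_eq_mul, mul_comm]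
  simp only [IsConnectedIn, not_forall, not_exists, not_and] at hconn
  obtain ⟨t, hts, htne, hsep⟩ := hconn
  have ht := ih t hts
  have hst := ih (s \ t) (sdiff_ssubset hts.subset htne)
  rw [G.sum_degreeIn_eq_add_sdiff hts.subset hsep, ← card_sdiff_add_card_eq_card hts.subset]
  linarith

/-- Deleting vertices of degree `< d` one by one, each costs at most `d - 1` edges. -/
theorem exists_subset_le_degreeIn (d : ℕ) (s : Finset V) :
    ∃ t ⊆ s, (∀ v ∈ t, d ≤ G.degreeIn t v) ∧
      ∑ v ∈ s, G.degreeIn s v + 2 * #s + 2 * d * #t ≤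
        ∑ v ∈ t, G.degreeIn t v + 2 * #t + 2 * d * #s := by
  induction s using Finset.strongInduction with | H s ih =>
  by_cases hlow : ∃ v ∈ s, G.degreeIn s v < d
  · obtain ⟨v, hv, hdeg⟩ := hlow
    obtain ⟨t, hts, htdeg, hsum⟩ := ih _ (erase_ssubset hv)
    refine ⟨t, hts.trans (erase_subset v s), htdeg, ?_⟩
    rw [G.sum_degreeIn_erase hv, ← card_erase_add_one hv]
    linarith
  push Not at hlow
  exact ⟨s, subset_rfl, hlow, le_rfl⟩

end degreeIn

theorem degree_induce_eq_degreeIn [Fintype V] [DecidableEq V] (s : Finset V) (v : s) :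
    (G.induce (s : Set V)).degree v = G.degreeIn s v := by
  rw [← card_neighborFinset_eq_degree, ← card_map (Function.Embedding.subtype _), degreeIn]
  congr 1
  ext w
  simp [and_comm]

theorem sum_degreeIn_univ [Fintype V] : ∑ v, G.degreeIn univ v = 2 * #G.edgeFinset := by
  simp_rw [degreeIn, ← neighborFinset_eq_filter, card_neighborFinset_eq_degree]
  exact G.sum_degrees_eq_twice_card_edges

end SimpleGraph

theorem stmt11 {n k : ℕ} (G : SimpleGraph (Fin n)) [DecidableRel G.Adj]
    (he : ((k : ℝ) - 1) * n - ((k : ℝ) ^ 2 - k - 1) ≤ (G.edgeFinset.card : ℝ))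
    (hP : ¬ HasPathOn G (2 * k)) :
    ∃ s : Finset (Fin n), (n : ℝ) - ((k : ℝ) ^ 2 - k - 1) ≤ (s.card : ℝ) ∧
      ∀ v : ↑(s : Set (Fin n)), (k : ℝ) - 1 ≤ ((G.induce (s : Set (Fin n))).degree v : ℝ) := by
  obtain ⟨d, rfl⟩ : ∃ d, k = d + 1 := Nat.exists_eq_add_one.2 <| Nat.pos_of_ne_zero <| by
    rintro rfl
    exact hP (SimpleGraph.hasPathOn_length_of_isChain List.nodup_nil List.IsChain.nil)
  obtain ⟨t, -, hdeg, hcore⟩ := G.exists_subset_le_degreeIn d univ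
  have hEG := G.sum_degreeIn_add_two_mul_card_le hP t
  rw [G.sum_degreeIn_univ, card_univ, Fintype.card_fin] at hcore
  refine ⟨t, ?_, fun v => ?_⟩
  · have hcore' : (2 * #G.edgeFinset + 2 * n + 2 * d * #t : ℝ) ≤
        ∑ v ∈ t, G.degreeIn t v + 2 * #t + 2 * d * n := by exact_mod_cast hcore
    have hEG' : (∑ v ∈ t, G.degreeIn t v + 2 * #t : ℝ) ≤ 2 * (d + 1) * #t := by
      exact_mod_cast hEG
    push_cast at he ⊢
    linarith
  · have hv : (d : ℝ) ≤ G.degreeIn t v := by exact_mod_cast hdeg v v.2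
    rw [G.degree_induce_eq_degreeIn]
    push_cast
    linarith
end

section
/- Let k ≥ 3 and let H be a graph with minimum degree δ(H) ≥ k − 1 that contains no path P_{2k} and is a subgraph of S_{h,k−1} spanning all h vertices, with independent set I of size h − (k−1) and clique side J of size k − 1. Then every vertex of I is adjacent to every vertex of J, and for any two vertices of I there exists a path on 2k − 1 vertices in H having them as endpoints. -/
open Finset

/-!
A vertex outside `J` has all of its at least `k - 1` neighbours in `J`, a set of exactly `k - 1`
vertices, so it is adjacent to all of `J`. Hence `H` contains the complete bipartite graph between
the independent side (at least `k` vertices) and `J`, where any two vertices of the independent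
side are joined by a path alternating between the two sides and using all of `J`.
-/

namespace SimpleGraph

variable {V : Type*} {G : SimpleGraph V}

theorem neighborFinset_eq_of_card_le_degree {J : Finset V} {a : V} [Fintype (G.neighborSet a)]
    (hout : ∀ b ∉ J, ¬ G.Adj a b) (hdeg : #J ≤ G.degree a) : G.neighborFinset a = J :=
  eq_of_subset_of_card_le
    (fun b hb => by_contra fun hbJ => hout b hbJ ((mem_neighborFinset G a b).1 hb))
    (by rwa [card_neighborFinset_eq_degree])

theorem exists_isPath_length_two_mul {A B : Finset V} (hAB : ∀ u ∈ A, ∀ v ∈ B, G.Adj u v)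
    {m : ℕ} (hm : 1 ≤ m) (hB : m ≤ #B) (hA : m + 1 ≤ #A) {a b : V} (ha : a ∈ A) (hb : b ∈ A)
    (hab : a ≠ b) :
    ∃ p : G.Walk a b, p.IsPath ∧ p.length = 2 * m ∧ ∀ w ∈ p.support, w ∈ A ∨ w ∈ B := by
  classical
  induction m, hm using Nat.le_induction generalizing A B a b with
  | base =>
    obtain ⟨y, hy⟩ := card_pos.1 (by omega : 0 < #B)
    have hay := hAB a ha y hy
    have hyb := (hAB b hb y hy).symm
    refine ⟨.cons hay (.cons hyb .nil), ?_, rfl, ?_⟩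
    · simp [Walk.cons_isPath_iff, hab, hay.ne, hyb.ne]
    · simp only [Walk.support_cons, Walk.support_nil, List.mem_cons, List.not_mem_nil]
      rintro w (rfl | rfl | rfl | h) <;> tauto
  | succ m hm ih =>
    -- prepend `a - y - c` to a path from `c` to `b` that avoids `a` and `y`
    have hdisj : ∀ u ∈ A, u ∉ B := fun u hu huB => (hAB u hu u huB).ne rfl
    obtain ⟨c, hc, hcb⟩ := exists_mem_ne (by rw [card_erase_of_mem ha]; omega : 1 < #(A.erase a)) b
    obtain ⟨hca, hcA⟩ := mem_erase.1 hc
    obtain ⟨y, hy⟩ := card_pos.1 (by omega : 0 < #B)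
    have hay := hAB a ha y hy
    obtain ⟨p, hp, hlen, hsupp⟩ := ih (A := A.erase a) (B := B.erase y)
      (fun u hu v hv => hAB u (mem_of_mem_erase hu) v (mem_of_mem_erase hv))
      (by rw [card_erase_of_mem hy]; omega) (by rw [card_erase_of_mem ha]; omega)
      hc (mem_erase.2 ⟨hab.symm, hb⟩) hcb
    have hyc := (hAB c hcA y hy).symm
    have hy_notin : y ∉ p.support := fun h => by
      rcases hsupp y h with h | h
      · exact hdisj y (mem_of_mem_erase h) hy
      · simp at h
    have ha_notin : a ∉ p.support := fun h => by
      rcases hsupp a h with h | h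
      · simp at h
      · exact hdisj a ha (mem_of_mem_erase h)
    refine ⟨.cons hay (.cons hyc p), (hp.cons hy_notin).cons ?_, by rw [Walk.length_cons, Walk.length_cons, hlen]; ring, ?_⟩
    · simp [hay.ne, ha_notin]
    · simp only [Walk.support_cons, List.mem_cons]
      rintro w (rfl | rfl | h)
      · exact .inl ha
      · exact .inr hy
      · exact (hsupp w h).imp mem_of_mem_erase mem_of_mem_erase

end SimpleGraph

open SimpleGraph

theorem stmt18 {h k : ℕ} (hk : 3 ≤ k) (hh : 2 * k - 1 ≤ h) (H : SimpleGraph (Fin h))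
    [DecidableRel H.Adj] (J : Finset (Fin h)) (hJ : J.card = k - 1)
    (hIind : ∀ a b : Fin h, a ∉ J → b ∉ J → ¬ H.Adj a b)
    (hδ : ∀ v, k - 1 ≤ H.degree v) :
    (∀ a ∉ J, ∀ b ∈ J, H.Adj a b) ∧
      ∀ a b : Fin h, a ∉ J → b ∉ J → a ≠ b →
        ∃ f : Fin (2 * k - 1) → Fin h, Function.Injective f ∧
          (∀ (i : ℕ) (hi : i + 1 < 2 * k - 1), H.Adj (f ⟨i, by omega⟩) (f ⟨i + 1, hi⟩)) ∧
          f ⟨0, by omega⟩ = a ∧ f ⟨2 * k - 2, by omega⟩ = b := by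
  have hIJ : ∀ a ∉ J, ∀ b ∈ J, H.Adj a b := fun a ha b hb => by
    rw [← neighborFinset_eq_of_card_le_degree (hIind a · ha) (hJ ▸ hδ a)] at hb
    exact (mem_neighborFinset H a b).1 hb
  refine ⟨hIJ, fun a b ha hb hab => ?_⟩
  have hI : k ≤ #Jᶜ := by rw [card_compl, Fintype.card_fin, hJ]; omega
  obtain ⟨p, hp, hlen, -⟩ := exists_isPath_length_two_mul (A := Jᶜ) (B := J)
    (fun u hu v hv => hIJ u (mem_compl.1 hu) v hv) (m := k - 1) (by omega) hJ.ge (by omega)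
    (mem_compl.2 ha) (mem_compl.2 hb) hab
  refine ⟨fun i => p.getVert i, fun i j hij => Fin.ext ?_,
    fun i hi => p.adj_getVert_succ (i := i) (by omega), p.getVert_zero, ?_⟩
  · exact hp.getVert_injOn (by simp only [Set.mem_ofPred_eq]; omega)
      (by simp only [Set.mem_ofPred_eq]; omega) hij
  · convert p.getVert_length using 2
    simp only [hlen]
    omega
end

section
/- Let k ≥ 3 and suppose G is a graph whose components F_1, …, F_t each satisfy: F_i contains an induced subgraph H_i isomorphic to a spanning subgraph of S_{h_i,k−1} with δ(H_i) ≥ k−1 and h_i ≥ 2k−1, F_i contains no path P_{2k}, and every vertex of F_i outside H_i has a neighbor in H_i. Then each F_i is a subgraph of S_{ν(F_i), k−1}, i.e., F_i has a set of k−1 vertices whose removal leaves an independent set. -/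
open Finset

/-!
Take `K = J`. Since `I` and `J` span a complete bipartite graph with `|I| ≥ k` and `|J| = k - 1`,
alternating between the two sides yields long paths inside `H` from any prescribed vertex. So an
edge `ab` avoiding `J` cannot exist: inside `I` it contradicts independence; with `a ∉ H`, `b ∈ I`
the path `a b j i j … i j` has `2k` vertices; with `a, b ∉ H` and `u ∈ H` a neighbour of `b`, the
path `a b u …` does.
-/

open SimpleGraph

namespace SimpleGraph.Walk

variable {V : Type*} {G : SimpleGraph V}

theorem IsPath.hasPathOn {u v : V} {p : G.Walk u v} (hp : p.IsPath) {n : ℕ}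
    (hn : n ≤ p.length + 1) : HasPathOn G n :=
  ⟨fun i => p.getVert i,
    fun i j h => Fin.ext (hp.getVert_injOn (by simp only [Set.mem_ofPred_eq]; omega)
      (by simp only [Set.mem_ofPred_eq]; omega) h),
    fun i hi => p.adj_getVert_succ (i := i) (by omega)⟩

theorem exists_isPath_of_forall_adj [DecidableEq V] (n : ℕ) :
    ∀ {A B : Finset V}, Disjoint A B → (∀ a ∈ A, ∀ b ∈ B, G.Adj a b) →
      n < 2 * #A → n ≤ 2 * #B → ∀ x ∈ A,
        ∃ (y : V) (p : G.Walk x y), p.IsPath ∧ p.length = n ∧ ∀ v ∈ p.support, v ∈ A ∪ B := by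
  induction n with
  | zero => exact fun _ _ _ _ x hx => ⟨x, nil, by simp, rfl, by simp [hx]⟩
  | succ n ih =>
    intro A B hdisj hAB hA hB x hx
    obtain ⟨b, hb⟩ : B.Nonempty := card_pos.mp (by omega)
    have hA' : #(A.erase x) = #A - 1 := card_erase_of_mem hx
    obtain ⟨y, p, hp, hlen, hsupp⟩ := ih (hdisj.symm.mono_right (erase_subset x A))
      (fun b hb a ha => (hAB a (mem_of_mem_erase ha) b hb).symm) (by omega) (by omega) b hb
    have hxp : x ∉ p.support := fun h => by
      rcases mem_union.mp (hsupp x h) with hxB | hxA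
      · exact Finset.disjoint_left.mp hdisj hx hxB
      · exact notMem_erase x A hxA
    refine ⟨y, cons (hAB x hx b hb) p, (cons_isPath_iff _ p).mpr ⟨hp, hxp⟩, by simp [hlen], ?_⟩
    simp only [support_cons, List.mem_cons, forall_eq_or_imp]
    refine ⟨mem_union_left B hx, fun v hv => ?_⟩
    rcases mem_union.mp (hsupp v hv) with hvB | hvA
    · exact mem_union_right A hvB
    · exact mem_union_left B (mem_of_mem_erase hvA)

end SimpleGraph.Walk

section CompleteBipartiteCore

variable {V : Type*} [DecidableEq V] {G : SimpleGraph V} {I J : Finset V} {k : ℕ}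

theorem hasPathOn_of_notMem_adj_mem (hdisj : Disjoint I J) (hIJ : ∀ a ∈ I, ∀ b ∈ J, G.Adj a b)
    (hI : k ≤ #I) (hJ : k - 1 ≤ #J) {a b : V} (ha : a ∉ I ∪ J) (hb : b ∈ I) (hab : G.Adj a b) :
    HasPathOn G (2 * k) := by
  have hI₀ : 0 < #I := card_pos.mpr ⟨b, hb⟩
  obtain ⟨y, p, hp, hlen, hsupp⟩ :=
    Walk.exists_isPath_of_forall_adj (2 * k - 2) hdisj hIJ (by omega) (by omega) b hb
  have hpath : (Walk.cons hab p).IsPath :=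
    (Walk.cons_isPath_iff hab p).mpr ⟨hp, fun h => ha (hsupp a h)⟩
  exact hpath.hasPathOn (by simp only [Walk.length_cons]; omega)

theorem hasPathOn_of_notMem_adj_notMem (hdisj : Disjoint I J) (hIJ : ∀ a ∈ I, ∀ b ∈ J, G.Adj a b)
    (hI : k ≤ #I) (hJ : k - 1 ≤ #J) {a b u : V} (ha : a ∉ I ∪ J) (hb : b ∉ I ∪ J) (hab : G.Adj a b)
    (hu : u ∈ I ∪ J) (hbu : G.Adj b u) : HasPathOn G (2 * k) := by
  obtain ⟨y, p, hp, hlen, hsupp⟩ : ∃ (y : V) (p : G.Walk u y),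
      p.IsPath ∧ p.length = 2 * k - 3 ∧ ∀ v ∈ p.support, v ∈ I ∪ J := by
    rcases mem_union.mp hu with huI | huJ
    · have hI₀ : 0 < #I := card_pos.mpr ⟨u, huI⟩
      exact Walk.exists_isPath_of_forall_adj _ hdisj hIJ (by omega) (by omega) u huI
    · have hJ₀ : 0 < #J := card_pos.mpr ⟨u, huJ⟩
      obtain ⟨y, p, hp, hlen, hsupp⟩ := Walk.exists_isPath_of_forall_adj (2 * k - 3) hdisj.symm
        (fun b hb a ha => (hIJ a ha b hb).symm) (by omega) (by omega) u huJ
      exact ⟨y, p, hp, hlen, fun v hv => union_comm J I ▸ hsupp v hv⟩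
  have hpath : (Walk.cons hab (Walk.cons hbu p)).IsPath := by
    simp only [Walk.cons_isPath_iff, Walk.support_cons, List.mem_cons, not_or]
    exact ⟨⟨hp, fun h => hb (hsupp b h)⟩, hab.ne, fun h => ha (hsupp a h)⟩
  exact hpath.hasPathOn (by simp only [Walk.length_cons]; omega)

end CompleteBipartiteCore

theorem stmt19_general {m k : ℕ} (F : SimpleGraph (Fin m)) [DecidableRel F.Adj]
    (I J : Finset (Fin m)) (hdisj : Disjoint I J)
    (hJ : J.card = k - 1) (hh : 2 * k - 1 ≤ I.card + J.card)
    (hIJ : ∀ a ∈ I, ∀ b ∈ J, F.Adj a b)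
    (hInd : ∀ a ∈ I, ∀ b ∈ I, ¬ F.Adj a b)
    (hP : ¬ HasPathOn F (2 * k))
    (hdomH : ∀ v, v ∉ I ∪ J → ∃ u ∈ I ∪ J, F.Adj v u) :
    ∃ K : Finset (Fin m), K.card = k - 1 ∧
      ∀ a b : Fin m, a ∉ K → b ∉ K → ¬ F.Adj a b := by
  have hI : k ≤ #I := by omega
  have hJ' : k - 1 ≤ #J := hJ.ge
  refine ⟨J, hJ, fun a b haJ hbJ hab => ?_⟩
  by_cases haI : a ∈ I <;> by_cases hbI : b ∈ I
  · exact hInd a haI b hbI hab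
  · exact hP (hasPathOn_of_notMem_adj_mem hdisj hIJ hI hJ' (by simp [hbI, hbJ]) haI hab.symm)
  · exact hP (hasPathOn_of_notMem_adj_mem hdisj hIJ hI hJ' (by simp [haI, haJ]) hbI hab)
  · obtain ⟨u, hu, hbu⟩ := hdomH b (by simp [hbI, hbJ])
    exact hP (hasPathOn_of_notMem_adj_notMem hdisj hIJ hI hJ' (by simp [haI, haJ])
      (by simp [hbI, hbJ]) hab hu hbu)

theorem stmt19 {m k : ℕ} (hk : 3 ≤ k) (F : SimpleGraph (Fin m)) [DecidableRel F.Adj]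
    (hconn : F.Connected) (I J : Finset (Fin m)) (hdisj : Disjoint I J)
    (hJ : J.card = k - 1) (hh : 2 * k - 1 ≤ I.card + J.card)
    (hIJ : ∀ a ∈ I, ∀ b ∈ J, F.Adj a b)
    (hInd : ∀ a ∈ I, ∀ b ∈ I, ¬ F.Adj a b)
    (hδ : ∀ v ∈ I ∪ J, k - 1 ≤ ((I ∪ J).filter (F.Adj v)).card)
    (hP : ¬ HasPathOn F (2 * k))
    (hdomH : ∀ v, v ∉ I ∪ J → ∃ u ∈ I ∪ J, F.Adj v u) :
    ∃ K : Finset (Fin m), K.card = k - 1 ∧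
      ∀ a b : Fin m, a ∉ K → b ∉ K → ¬ F.Adj a b :=
  stmt19_general F I J hdisj hJ hh hIJ hInd hP hdomH
end
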